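/- Let (Ω, P) be a probability space and E a real inner product space. Let M ≥ 1, let u : Ω → E be a measurable random vector with E‖u‖² < ∞, and let v_0, …, v_{M−1} : Ω → E be measurable random vectors with ‖v_i‖ ≤ D almost surely for a constant D ≥ 0. Suppose there are constants Λ ≥ 0 and ρ ∈ [0,1) such that for all i ≠ j, E⟨v_i, v_j⟩ ≤ Λ ρ^{|i−j|} D². Then for every λ > 0, E⟨u, (1/M) ∑_{i=0}^{M−1} v_i⟩ ≤ (λ/8) E‖u‖² + (2 D²/(λ M)) (1 + 2Λρ/(1−ρ)). -/

import Mathlib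

open MeasureTheory
open scoped RealInnerProductSpace

/-!
Young's inequality `⟪u, w⟫ ≤ (λ/8)‖u‖² + (2/λ)‖w‖²`, integrated, reduces the claim to the variance
bound `E‖(1/M) ∑ vᵢ‖² ≤ (D²/M)(1 + 2Λρ/(1-ρ))`. Expanding the square, the diagonal terms contribute
at most `M D²`, and in each row the off-diagonal correlations sum to at most
`Λ D² ∑_{k ≠ 0} ρ^|k| = Λ D² · 2ρ/(1-ρ)`.
-/

lemma hasSum_pow_natAbs {ρ : ℝ} (hρ0 : 0 ≤ ρ) (hρ1 : ρ < 1) :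
    HasSum (fun k : ℤ => ρ ^ k.natAbs) ((1 + ρ) / (1 - ρ)) := by
  have hnat := hasSum_geometric_of_lt_one hρ0 hρ1
  have hneg : HasSum (fun n : ℕ => ρ ^ (-((n : ℤ) + 1)).natAbs) (ρ * (1 - ρ)⁻¹) := by
    refine (hnat.mul_left ρ).congr_fun fun n => ?_
    rw [Int.natAbs_neg, ← pow_succ']
    norm_cast
  rw [show (1 + ρ) / (1 - ρ) = (1 - ρ)⁻¹ + ρ * (1 - ρ)⁻¹ by ring]
  exact hnat.of_nat_of_neg_add_one hneg

lemma sum_erase_pow_natAbs_sub_le {ρ : ℝ} (hρ0 : 0 ≤ ρ) (hρ1 : ρ < 1) {n : ℕ} (i : Fin n) :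
    ∑ j ∈ Finset.univ.erase i, ρ ^ ((i : ℤ) - (j : ℤ)).natAbs ≤ 2 * ρ / (1 - ρ) := by
  have hinj : Set.InjOn (fun j : Fin n => (i : ℤ) - (j : ℤ)) (Finset.univ : Finset (Fin n)) := by
    intro a _ b _ hab
    simp only [sub_right_inj, Nat.cast_inj] at hab
    exact Fin.ext hab
  have htotal : ∑ j : Fin n, ρ ^ ((i : ℤ) - (j : ℤ)).natAbs ≤ (1 + ρ) / (1 - ρ) := by
    rw [← Finset.sum_image (f := fun k : ℤ => ρ ^ k.natAbs) hinj]
    exact sum_le_hasSum _ (fun k _ => pow_nonneg hρ0 _) (hasSum_pow_natAbs hρ0 hρ1)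
  rw [← Finset.add_sum_erase _ _ (Finset.mem_univ i)] at htotal
  have hsplit : (1 + ρ) / (1 - ρ) = 1 + 2 * ρ / (1 - ρ) := by
    field_simp [(sub_pos.2 hρ1).ne']
    ring
  simp only [sub_self, Int.natAbs_zero, pow_zero] at htotal
  linarith

lemma sum_sum_le_of_le_pow_natAbs {n : ℕ} {c : Fin n → Fin n → ℝ} {D Λ ρ : ℝ} (hΛ : 0 ≤ Λ)
    (hρ0 : 0 ≤ ρ) (hρ1 : ρ < 1) (hdiag : ∀ i, c i i ≤ D ^ 2)
    (hoff : ∀ i j, i ≠ j → c i j ≤ Λ * ρ ^ ((i : ℤ) - (j : ℤ)).natAbs * D ^ 2) :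
    ∑ i, ∑ j, c i j ≤ n * D ^ 2 * (1 + 2 * Λ * ρ / (1 - ρ)) := by
  have hrow : ∀ i, ∑ j, c i j ≤ D ^ 2 * (1 + 2 * Λ * ρ / (1 - ρ)) := by
    intro i
    rw [← Finset.add_sum_erase _ _ (Finset.mem_univ i)]
    calc c i i + ∑ j ∈ Finset.univ.erase i, c i j
        ≤ D ^ 2 + ∑ j ∈ Finset.univ.erase i, Λ * D ^ 2 * ρ ^ ((i : ℤ) - (j : ℤ)).natAbs := by
          gcongr with j hj
          · exact hdiag i
          · exact (hoff i j (Finset.ne_of_mem_erase hj).symm).trans_eq (by ring)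
      _ ≤ D ^ 2 + Λ * D ^ 2 * (2 * ρ / (1 - ρ)) := by
          rw [← Finset.mul_sum]
          gcongr
          exact sum_erase_pow_natAbs_sub_le hρ0 hρ1 i
      _ = D ^ 2 * (1 + 2 * Λ * ρ / (1 - ρ)) := by ring
  calc ∑ i, ∑ j, c i j ≤ ∑ _i : Fin n, D ^ 2 * (1 + 2 * Λ * ρ / (1 - ρ)) :=
        Finset.sum_le_sum fun i _ => hrow i
    _ = n * D ^ 2 * (1 + 2 * Λ * ρ / (1 - ρ)) := by
        rw [Finset.sum_const, Finset.card_univ, Fintype.card_fin, nsmul_eq_mul, mul_assoc]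
        ring

section

variable {E : Type*} [NormedAddCommGroup E] [InnerProductSpace ℝ E]

lemma real_inner_le_young (x y : E) {lam : ℝ} (hlam : 0 < lam) :
    ⟪x, y⟫ ≤ lam / 8 * ‖x‖ ^ 2 + 2 / lam * ‖y‖ ^ 2 := by
  have hsq : lam / 8 * ‖x‖ ^ 2 + 2 / lam * ‖y‖ ^ 2 - ‖x‖ * ‖y‖
      = (lam * ‖x‖ - 4 * ‖y‖) ^ 2 / (8 * lam) := by
    field_simp
    ring
  have : 0 ≤ (lam * ‖x‖ - 4 * ‖y‖) ^ 2 / (8 * lam) := by positivity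
  linarith [real_inner_le_norm x y]

variable {Ω : Type*} [MeasurableSpace Ω] {P : Measure Ω}

lemma integral_inner_le_young {u w : Ω → E} (hu : Integrable (fun ω => ‖u ω‖ ^ 2) P)
    (hw : Integrable (fun ω => ‖w ω‖ ^ 2) P) {lam : ℝ} (hlam : 0 < lam) :
    ∫ ω, ⟪u ω, w ω⟫ ∂P ≤ lam / 8 * ∫ ω, ‖u ω‖ ^ 2 ∂P + 2 / lam * ∫ ω, ‖w ω‖ ^ 2 ∂P := by
  by_cases huw : Integrable (fun ω => ⟪u ω, w ω⟫) P
  · rw [← integral_const_mul, ← integral_const_mul, ← integral_add (hu.const_mul _)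
      (hw.const_mul _)]
    exact integral_mono huw ((hu.const_mul _).add (hw.const_mul _))
      fun ω => real_inner_le_young (u ω) (w ω) hlam
  · rw [integral_undef huw]
    have hu0 : 0 ≤ ∫ ω, ‖u ω‖ ^ 2 ∂P := integral_nonneg fun ω => by positivity
    have hw0 : 0 ≤ ∫ ω, ‖w ω‖ ^ 2 ∂P := integral_nonneg fun ω => by positivity
    positivity

lemma integral_norm_sum_sq {ι : Type*} [Fintype ι] {v : ι → Ω → E}
    (hint : ∀ i j, Integrable (fun ω => ⟪v i ω, v j ω⟫) P) :
    ∫ ω, ‖∑ i, v i ω‖ ^ 2 ∂P = ∑ i, ∑ j, ∫ ω, ⟪v i ω, v j ω⟫ ∂P := by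
  simp_rw [← real_inner_self_eq_norm_sq, sum_inner, inner_sum]
  rw [integral_finsetSum _ fun i _ => integrable_finsetSum _ fun j _ => hint i j]
  exact Finset.sum_congr rfl fun i _ => integral_finsetSum _ fun j _ => hint i j

lemma integrable_norm_smul_sum_sq [IsFiniteMeasure P] {ι : Type*} [Fintype ι] {v : ι → Ω → E}
    (hmeas : ∀ i, AEStronglyMeasurable (v i) P) {D : ℝ} (hbd : ∀ i, ∀ᵐ ω ∂P, ‖v i ω‖ ≤ D)
    (c : ℝ) : Integrable (fun ω => ‖c • ∑ i, v i ω‖ ^ 2) P := by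
  have hL2 : MemLp (fun ω => c • ∑ i, v i ω) 2 P :=
    (memLp_finsetSum _ fun i _ =>
      (memLp_top_of_bound (hmeas i) D (hbd i)).mono_exponent le_top).const_smul c
  exact hL2.integrable_norm_pow'

lemma integral_norm_average_sq_le [IsProbabilityMeasure P] {n : ℕ} {v : Fin n → Ω → E}
    (hmeas : ∀ i, AEStronglyMeasurable (v i) P) {D : ℝ} (hbd : ∀ i, ∀ᵐ ω ∂P, ‖v i ω‖ ≤ D)
    {Λ ρ : ℝ} (hΛ : 0 ≤ Λ) (hρ0 : 0 ≤ ρ) (hρ1 : ρ < 1)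
    (hcorr : ∀ i j : Fin n, i ≠ j →
      ∫ ω, ⟪v i ω, v j ω⟫ ∂P ≤ Λ * ρ ^ ((i : ℤ) - (j : ℤ)).natAbs * D ^ 2) :
    ∫ ω, ‖(n : ℝ)⁻¹ • ∑ i, v i ω‖ ^ 2 ∂P ≤ D ^ 2 / n * (1 + 2 * Λ * ρ / (1 - ρ)) := by
  have hint : ∀ i j, Integrable (fun ω => ⟪v i ω, v j ω⟫) P := fun i j =>
    .of_bound ((hmeas i).inner (hmeas j)) (D ^ 2) <| by
      filter_upwards [hbd i, hbd j] with ω hi hj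
      rw [sq]
      exact (norm_inner_le_norm _ _).trans
        (mul_le_mul hi hj (norm_nonneg _) ((norm_nonneg _).trans hi))
  have hdiag : ∀ i, ∫ ω, ⟪v i ω, v i ω⟫ ∂P ≤ D ^ 2 := fun i => by
    calc ∫ ω, ⟪v i ω, v i ω⟫ ∂P ≤ ∫ _ω, D ^ 2 ∂P :=
          integral_mono_ae (hint i i) (integrable_const _) <| by
            filter_upwards [hbd i] with ω hi
            rw [real_inner_self_eq_norm_sq]
            exact pow_le_pow_left₀ (norm_nonneg _) hi 2
      _ = D ^ 2 := by simp
  have hsum := sum_sum_le_of_le_pow_natAbs hΛ hρ0 hρ1 hdiag hcorr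
  simp_rw [norm_smul, mul_pow]
  rw [integral_const_mul, integral_norm_sum_sq hint, Real.norm_eq_abs, sq_abs]
  calc (n : ℝ)⁻¹ ^ 2 * ∑ i, ∑ j, ∫ ω, ⟪v i ω, v j ω⟫ ∂P
      ≤ (n : ℝ)⁻¹ ^ 2 * (n * D ^ 2 * (1 + 2 * Λ * ρ / (1 - ρ))) := by gcongr
    _ = D ^ 2 / n * (1 + 2 * Λ * ρ / (1 - ρ)) := by
        rcases Nat.eq_zero_or_pos n with rfl | hn
        · simp
        · field_simp

end

theorem markovian_linear_noise_bound_general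
    {Ω : Type*} [MeasurableSpace Ω] (P : Measure Ω) [IsProbabilityMeasure P]
    {E : Type*} [NormedAddCommGroup E] [InnerProductSpace ℝ E]
    (M : ℕ)
    (u : Ω → E) (v : Fin M → Ω → E)
    (hvmeas : ∀ i, AEStronglyMeasurable (v i) P)
    (huint : Integrable (fun ω => ‖u ω‖ ^ 2) P)
    (D : ℝ)
    (hvbd : ∀ i, ∀ᵐ ω ∂P, ‖v i ω‖ ≤ D)
    (Λ ρ : ℝ) (hΛ : 0 ≤ Λ) (hρ0 : 0 ≤ ρ) (hρ1 : ρ < 1)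
    (hcorr : ∀ i j : Fin M, i ≠ j →
      ∫ ω, ⟪v i ω, v j ω⟫ ∂P ≤ Λ * ρ ^ ((i : ℤ) - (j : ℤ)).natAbs * D ^ 2)
    (lam : ℝ) (hlam : 0 < lam) :
    ∫ ω, ⟪u ω, (M : ℝ)⁻¹ • ∑ i, v i ω⟫ ∂P
      ≤ (lam / 8) * ∫ ω, ‖u ω‖ ^ 2 ∂P
        + (2 * D ^ 2 / (lam * M)) * (1 + 2 * Λ * ρ / (1 - ρ)) := by
  calc ∫ ω, ⟪u ω, (M : ℝ)⁻¹ • ∑ i, v i ω⟫ ∂P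
      ≤ lam / 8 * ∫ ω, ‖u ω‖ ^ 2 ∂P + 2 / lam * ∫ ω, ‖(M : ℝ)⁻¹ • ∑ i, v i ω‖ ^ 2 ∂P :=
        integral_inner_le_young huint (integrable_norm_smul_sum_sq hvmeas hvbd _) hlam
    _ ≤ lam / 8 * ∫ ω, ‖u ω‖ ^ 2 ∂P + 2 / lam * (D ^ 2 / M * (1 + 2 * Λ * ρ / (1 - ρ))) := by
        gcongr
        exact integral_norm_average_sq_le hvmeas hvbd hΛ hρ0 hρ1 hcorr
    _ = (lam / 8) * ∫ ω, ‖u ω‖ ^ 2 ∂P + (2 * D ^ 2 / (lam * M)) * (1 + 2 * Λ * ρ / (1 - ρ)) := by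
        ring

/-- Markovian-noise bound for a linear term: if `E‖u‖² < ∞`, `‖v i‖ ≤ D` a.s. and the
correlations of distinct `v i, v j` decay geometrically, then for every `λ > 0`,
`E⟪u, (1/M) ∑ v i⟫ ≤ (λ/8) E‖u‖² + (2D²/(λM))(1 + 2Λρ/(1−ρ))`. -/
theorem markovian_linear_noise_bound
    {Ω : Type*} [MeasurableSpace Ω] (P : Measure Ω) [IsProbabilityMeasure P]
    {E : Type*} [NormedAddCommGroup E] [InnerProductSpace ℝ E]
    (M : ℕ) (hM : 1 ≤ M)
    (u : Ω → E) (v : Fin M → Ω → E)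
    (humeas : AEStronglyMeasurable u P)
    (hvmeas : ∀ i, AEStronglyMeasurable (v i) P)
    (huint : Integrable (fun ω => ‖u ω‖ ^ 2) P)
    (D : ℝ) (hD : 0 ≤ D)
    (hvbd : ∀ i, ∀ᵐ ω ∂P, ‖v i ω‖ ≤ D)
    (Λ ρ : ℝ) (hΛ : 0 ≤ Λ) (hρ0 : 0 ≤ ρ) (hρ1 : ρ < 1)
    (hcorr : ∀ i j : Fin M, i ≠ j →
      ∫ ω, ⟪v i ω, v j ω⟫ ∂P ≤ Λ * ρ ^ ((i : ℤ) - (j : ℤ)).natAbs * D ^ 2)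
    (lam : ℝ) (hlam : 0 < lam) :
    ∫ ω, ⟪u ω, (M : ℝ)⁻¹ • ∑ i, v i ω⟫ ∂P
      ≤ (lam / 8) * ∫ ω, ‖u ω‖ ^ 2 ∂P
        + (2 * D ^ 2 / (lam * M)) * (1 + 2 * Λ * ρ / (1 - ρ)) :=
  markovian_linear_noise_bound_general P M u v hvmeas huint D hvbd Λ ρ hΛ hρ0 hρ1 hcorr lam hlam
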